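/- Let x : I → ℝ⁸ together with u¹, u² : I → ℝ be a differentiable solution of the academic example on an interval I with x⁶(t) ≠ 0 for all t ∈ I. Define along the solution: y₁ = x¹, y₂ = x², z₁ = x⁴ + 1, z₂ = x³x⁴ − x⁵, z₃ = x³, z₄ = 1/x⁶, w₁ = −x⁷/(x⁶)², w₂ = x⁶(x⁷ − x⁸ + x¹). Then these functions are differentiable and satisfy the triangular system: ẏ₁ = z₁, ẏ₂ = z₂, ż₁ = w₂, ż₂ = z₃·w₂, ż₃ = z₄·w₂ − y₁, and ż₄ = w₁; i.e., the academic example is transformed into the paper's structurally flat triangular form. -/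

import Mathlib

/-- A differentiable solution of the academic example
`ẋ¹ = x⁴+1`, `ẋ² = x³x⁴−x⁵`, `ẋ³ = x⁷−x⁸`, `ẋ⁴ = x⁶(x⁷−x⁸+x¹)`, `ẋ⁵ = x⁴(x⁷−x⁸)`,
`ẋ⁶ = x⁷`, `ẋ⁷ = u¹`, `ẋ⁸ = u²` on a set `I ⊆ ℝ`
(0-based component indices: `x s j` is the paper's `x^{j+1}(s)`). -/
def IsAcadSolution (I : Set ℝ) (x : ℝ → Fin 8 → ℝ) (u1 u2 : ℝ → ℝ) : Prop :=
  ∀ t ∈ I,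
    HasDerivAt (fun s => x s 0) (x t 3 + 1) t ∧
    HasDerivAt (fun s => x s 1) (x t 2 * x t 3 - x t 4) t ∧
    HasDerivAt (fun s => x s 2) (x t 6 - x t 7) t ∧
    HasDerivAt (fun s => x s 3) (x t 5 * (x t 6 - x t 7 + x t 0)) t ∧
    HasDerivAt (fun s => x s 4) (x t 3 * (x t 6 - x t 7)) t ∧
    HasDerivAt (fun s => x s 5) (x t 6) t ∧
    HasDerivAt (fun s => x s 6) (u1 t) t ∧
    HasDerivAt (fun s => x s 7) (u2 t) t

theorem HasDerivAt.mul_sub_of_hasDerivAt_mul {𝕜 : Type*} [NontriviallyNormedField 𝕜]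
    {a b c : 𝕜 → 𝕜} {a' b' t : 𝕜} (ha : HasDerivAt a a' t) (hb : HasDerivAt b b' t)
    (hc : HasDerivAt c (b t * a') t) :
    HasDerivAt (fun s => a s * b s - c s) (a t * b') t :=
  ((ha.mul hb).sub hc).congr_deriv (by ring)

/-- Along any solution of the academic example with `x⁶(t) ≠ 0` on `I`, the functions
`y₁ = x¹`, `y₂ = x²`, `z₁ = x⁴+1`, `z₂ = x³x⁴−x⁵`, `z₃ = x³`, `z₄ = 1/x⁶`,
`w₁ = −x⁷/(x⁶)²`, `w₂ = x⁶(x⁷−x⁸+x¹)` are differentiable and satisfy the triangular system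
`ẏ₁ = z₁`, `ẏ₂ = z₂`, `ż₁ = w₂`, `ż₂ = z₃·w₂`, `ż₃ = z₄·w₂ − y₁`, `ż₄ = w₁`:
the academic example is transformed into the paper's structurally flat triangular form. -/
theorem stmt17 (I : Set ℝ) (x : ℝ → Fin 8 → ℝ) (u1 u2 : ℝ → ℝ)
    (hsol : IsAcadSolution I x u1 u2) (hx6 : ∀ t ∈ I, x t 5 ≠ 0) :
    ∀ t ∈ I,
      -- ẏ₁ = z₁
      HasDerivAt (fun s => x s 0) (x t 3 + 1) t ∧
      -- ẏ₂ = z₂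
      HasDerivAt (fun s => x s 1) (x t 2 * x t 3 - x t 4) t ∧
      -- ż₁ = w₂
      HasDerivAt (fun s => x s 3 + 1) (x t 5 * (x t 6 - x t 7 + x t 0)) t ∧
      -- ż₂ = z₃·w₂
      HasDerivAt (fun s => x s 2 * x s 3 - x s 4)
        (x t 2 * (x t 5 * (x t 6 - x t 7 + x t 0))) t ∧
      -- ż₃ = z₄·w₂ − y₁
      HasDerivAt (fun s => x s 2)
        ((1 / x t 5) * (x t 5 * (x t 6 - x t 7 + x t 0)) - x t 0) t ∧
      -- ż₄ = w₁
      HasDerivAt (fun s => 1 / x s 5) (-(x t 6) / (x t 5) ^ 2) t := by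
  intro t ht
  obtain ⟨h0, h1, h2, h3, h4, h5, -, -⟩ := hsol t ht
  have hx6t := hx6 t ht
  have hdrift : (1 / x t 5) * (x t 5 * (x t 6 - x t 7 + x t 0)) - x t 0 = x t 6 - x t 7 := by
    field_simp
    ring
  refine ⟨h0, h1, h3.add_const 1, h2.mul_sub_of_hasDerivAt_mul h3 h4,
    h2.congr_deriv hdrift.symm, ?_⟩
  simpa only [one_div] using h5.fun_inv hx6t
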